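/- arXiv:2210.14638 — 3 statements merged into one kernel-verified Lean document; each statement's English description precedes it below -/
import Mathlib

section
/- For every graph G and positive integer k, the k-improved graph G^⟨k⟩ is k-complemented; that is, for every pair of vertices x, y of G^⟨k⟩, if every separation (A,B) of G^⟨k⟩ with x ∈ A \ B and y ∈ B \ A has order greater than k, then xy is an edge of G^⟨k⟩. -/
open Finset

variable {V : Type*} [Fintype V] [DecidableEq V]

/-- A separation of a graph: a pair of vertex sets covering all vertices with no edge
between the two strict sides. Its order is `(A ∩ B).card`. -/
def IsSep (G : SimpleGraph V) (A B : Finset V) : Prop :=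
  A ∪ B = Finset.univ ∧
    ∀ a ∈ A, a ∉ B → ∀ b ∈ B, b ∉ A → ¬ G.Adj a b

/-- The `k`-improved graph `G^⟨k⟩`: `x` and `y` are adjacent iff they are distinct and no
separation of `G` of order at most `k` separates them (i.e. `μ_G(x,y) > k`). -/
def ImprovedGraph (G : SimpleGraph V) (k : ℕ) : SimpleGraph V where
  Adj x y := x ≠ y ∧ ∀ A B : Finset V, IsSep G A B → (A ∩ B).card ≤ k →
    ¬ ((x ∈ A ∧ x ∉ B ∧ y ∈ B ∧ y ∉ A) ∨ (y ∈ A ∧ y ∉ B ∧ x ∈ B ∧ x ∉ A))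
  symm := by
    constructor
    rintro x y ⟨hxy, h⟩
    exact ⟨hxy.symm, fun A B hs ho hc => h A B hs ho hc.symm⟩
  loopless := ⟨fun x h => h.1 rfl⟩

/-- `S` is `(q,k)`-unbreakable in `G`: every separation of order at most `k` has at most `q`
vertices of `S` on one of its sides. -/
def UnbreakableSet (G : SimpleGraph V) (S : Finset V) (q k : ℕ) : Prop :=
  ∀ A B : Finset V, IsSep G A B → (A ∩ B).card ≤ k →
    (A ∩ S).card ≤ q ∨ (B ∩ S).card ≤ q

/-- A clique separation: both strict sides nonempty and the separator is a clique. -/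
def IsCliqueSep (G : SimpleGraph V) (A B : Finset V) : Prop :=
  IsSep G A B ∧ (A \ B).Nonempty ∧ (B \ A).Nonempty ∧ G.IsClique (↑(A ∩ B) : Set V)

/-- `y` is reachable from `x` in `G − W`. -/
def AvoidReach (G : SimpleGraph V) (W : Finset V) (x y : V) : Prop :=
  ∃ p : G.Walk x y, ∀ v ∈ p.support, v ∉ W

/-- `W` is an `X`-`Y` separator: no vertex of `Y \ W` is reachable from `X \ W` in `G − W`. -/
def IsSepSet (G : SimpleGraph V) (W X Y : Finset V) : Prop :=
  ∀ x ∈ X, ∀ y ∈ Y, ¬ AvoidReach G W x y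

/-- `R_{G−W}(X \ W)`: the set of vertices reachable from `X \ W` in `G − W`. -/
def ReachSet (G : SimpleGraph V) (W X : Finset V) : Set V :=
  {y | ∃ x ∈ X, AvoidReach G W x y}

/-- An important `X`-`Y` separator. -/
def IsImpSep (G : SimpleGraph V) (X Y W : Finset V) : Prop :=
  IsSepSet G W X Y ∧
  (∀ W' ⊆ W, W' ≠ W → ¬ IsSepSet G W' X Y) ∧
  ∀ W' : Finset V, IsSepSet G W' X Y → W'.card ≤ W.card →
    ¬ (ReachSet G W X ⊂ ReachSet G W' X)

/-- A `k`-important `X`-`Y` separator. -/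
def IsKImpSep (G : SimpleGraph V) (k : ℕ) (X Y W : Finset V) : Prop :=
  IsImpSep G X Y W ∧ W.card ≤ k ∧
  ∀ W' : Finset V, IsImpSep G X Y W' → W'.card ≤ k → W' ≠ W →
    ¬ (ReachSet G W X ⊆ ReachSet G W' X)

/-- The `k`-important separator extension of `D`. -/
def KImpExt (G : SimpleGraph V) (D : Finset V) (k : ℕ) : Set V :=
  {u | (∃ v, v ≠ u ∧ ∃ S : Finset V, IsKImpSep G k {v} D S ∧ u ∈ S) ∨
       (({u} : Finset V).card ≤ k ∧ IsSepSet G {u} {u} D ∧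
        ∀ S : Finset V, IsSepSet G S {u} D → S.card ≤ k → S = {u})}

/-- `C` is (the vertex set of) a connected component of `G − A`. -/
def IsCompAvoiding (G : SimpleGraph V) (A : Set V) (C : Set V) : Prop :=
  ∃ x, x ∉ A ∧ C = {y | ∃ p : G.Walk x y, ∀ v ∈ p.support, v ∉ A}

/-- `C` is (the vertex set of) a connected component of the induced subgraph `G[S]`. -/
def IsCompWithin (G : SimpleGraph V) (S : Set V) (C : Set V) : Prop :=
  ∃ x ∈ S, C = {y | ∃ p : G.Walk x y, ∀ v ∈ p.support, v ∈ S}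

/-- The (open) neighborhood of a vertex set `C` in `G`. -/
def nbhdSet (G : SimpleGraph V) (C : Set V) : Set V :=
  {v | v ∉ C ∧ ∃ c ∈ C, G.Adj v c}

/-- A connectivity-sensitive star decomposition of `G`, given by its central bag and its
set of leaf bags. -/
structure ConnSensStar (G : SimpleGraph V) where
  center : Finset V
  leaves : Finset (Finset V)
  cover : ∀ v : V, v ∈ center ∨ ∃ L ∈ leaves, v ∈ L
  edges : ∀ x y : V, G.Adj x y →
    (x ∈ center ∧ y ∈ center) ∨ ∃ L ∈ leaves, x ∈ L ∧ y ∈ L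
  inter : ∀ L ∈ leaves, ∀ L' ∈ leaves, L ≠ L' → ∀ v ∈ L, v ∈ L' → v ∈ center
  adh_distinct : ∀ L ∈ leaves, ∀ L' ∈ leaves, L ∩ center = L' ∩ center → L = L'
  comp_nbhd : ∀ L ∈ leaves, ∀ C : Set V,
    IsCompWithin G ((↑L : Set V) \ (↑center : Set V)) C → nbhdSet G C = ↑(L ∩ center)

/-- `(A,B)` is an `S`-stable separation of `G`. -/
def IsStableSep (G : SimpleGraph V) (S : Finset V) (A B : Finset V) : Prop :=
  IsSep G A B ∧ ∃ SL SR : Finset V, SL ∪ SR = S ∧ SL ∩ SR = ∅ ∧ SL ⊆ A ∧ SR ⊆ B ∧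
    ∀ A' B' : Finset V, IsSep G A' B' → SL ⊆ A' → SR ⊆ B' → (A ∩ B).card ≤ (A' ∩ B').card

/-- A `Λ`-boundaried graph: a graph together with an injective partial assignment of
labels to (boundary) vertices. -/
structure BGraph (Λ : Type*) (V : Type*) where
  G : SimpleGraph V
  bd : Λ → Option V
  inj : ∀ l l' v, bd l = some v → bd l' = some v → l = l'

/-- `K` (with embeddings `f₁`, `f₂`) is the gluing `H₁ ⊕ H₂` of two boundaried graphs:
vertices of equal label are identified, and an edge is present iff it is present in
(at least) one of the two graphs. -/
def IsGluing {Λ V₁ V₂ W : Type*} (H₁ : BGraph Λ V₁) (H₂ : BGraph Λ V₂)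
    (K : SimpleGraph W) (f₁ : V₁ → W) (f₂ : V₂ → W) : Prop :=
  Function.Injective f₁ ∧ Function.Injective f₂ ∧
  (∀ w : W, (∃ a, f₁ a = w) ∨ (∃ b, f₂ b = w)) ∧
  (∀ a b, f₁ a = f₂ b ↔ ∃ l, H₁.bd l = some a ∧ H₂.bd l = some b) ∧
  (∀ x y : W, K.Adj x y ↔
    (∃ a b, f₁ a = x ∧ f₁ b = y ∧ H₁.G.Adj a b) ∨
    (∃ a b, f₂ a = x ∧ f₂ b = y ∧ H₂.G.Adj a b))

/-- The weak cut signature value of the boundaried graph `H` at `(A', B')` is at most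
`n − |A' ∩ B'|`: there is a separation of order at most `n` whose sides contain the
boundary vertices labeled by `A'` and `B'`, respectively. -/
def WeakSigLE {Λ : Type*} {V : Type*} [Fintype V] [DecidableEq V]
    (H : BGraph Λ V) (A' B' : Finset Λ) (n : ℕ) : Prop :=
  ∃ A B : Finset V, IsSep H.G A B ∧
    (∀ l ∈ A', ∀ v, H.bd l = some v → v ∈ A) ∧
    (∀ l ∈ B', ∀ v, H.bd l = some v → v ∈ B) ∧ (A ∩ B).card ≤ n

/-- Two `Λ`-boundaried graphs have the same weak cut signature. -/
def SameWeakSig {Λ : Type*} [Fintype Λ] [DecidableEq Λ] {V₁ V₂ : Type*}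
    [Fintype V₁] [DecidableEq V₁] [Fintype V₂] [DecidableEq V₂]
    (H₁ : BGraph Λ V₁) (H₂ : BGraph Λ V₂) : Prop :=
  ∀ A' B' : Finset Λ, A' ∪ B' = Finset.univ →
    ∀ n : ℕ, WeakSigLE H₁ A' B' n ↔ WeakSigLE H₂ A' B' n

/-! A separation of `G` of order at most `k` is also a separation of `G^⟨k⟩`: an edge of
`G^⟨k⟩` crossing it would join two vertices that this very separation separates. -/

theorem IsSep.symm {G : SimpleGraph V} {A B : Finset V} (hs : IsSep G A B) : IsSep G B A :=
  ⟨by rw [Finset.union_comm]; exact hs.1,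
    fun b hb hbA a ha haB hadj => hs.2 a ha haB b hb hbA hadj.symm⟩

theorem IsSep.improvedGraph {G : SimpleGraph V} {k : ℕ} {A B : Finset V} (hs : IsSep G A B)
    (hc : (A ∩ B).card ≤ k) : IsSep (ImprovedGraph G k) A B :=
  ⟨hs.1, fun _ ha haB _ hb hbA hadj => hadj.2 A B hs hc (Or.inl ⟨ha, haB, hb, hbA⟩)⟩

theorem improved_graph_k_complemented_general (G : SimpleGraph V) (k : ℕ)
    (x y : V) (hxy : x ≠ y)
    (h : ∀ A B : Finset V, IsSep (ImprovedGraph G k) A B →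
      x ∈ A → x ∉ B → y ∈ B → y ∉ A → k < (A ∩ B).card) :
    (ImprovedGraph G k).Adj x y := by
  refine ⟨hxy, fun A B hs hc hsep => hc.not_gt ?_⟩
  rcases hsep with ⟨hxA, hxB, hyB, hyA⟩ | ⟨hyA, hyB, hxB, hxA⟩
  · exact h A B (hs.improvedGraph hc) hxA hxB hyB hyA
  · rw [Finset.inter_comm]
    exact h B A (hs.improvedGraph hc).symm hxB hxA hyA hyB

/-- For every graph `G` and positive integer `k`, the `k`-improved graph
`G^⟨k⟩` is `k`-complemented: if every separation `(A,B)` of `G^⟨k⟩` with `x ∈ A \ B` and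
`y ∈ B \ A` has order greater than `k`, then `xy` is an edge of `G^⟨k⟩`. -/
theorem improved_graph_k_complemented (G : SimpleGraph V) (k : ℕ) (hk : 0 < k)
    (x y : V) (hxy : x ≠ y)
    (h : ∀ A B : Finset V, IsSep (ImprovedGraph G k) A B →
      x ∈ A → x ∉ B → y ∈ B → y ∉ A → k < (A ∩ B).card) :
    (ImprovedGraph G k).Adj x y :=
  improved_graph_k_complemented_general G k x y hxy h
end

section
/- For any two sets X, Y of vertices in a graph G and any integer k, there are at most 4^k important X-Y separators of size at most k in G. -/
open Finset

variable {V : Type*} [Fintype V] [DecidableEq V]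

/-!
Marx's branching on the furthest minimum separator. More generally we count important separators
`W` with `|W| ≤ k` that contain a set `F` and leave a set `P` reachable from `X`. A source side `Z`
(disjoint from `Y` and `F`, containing `P`) determines the separator
`boundary Z = F ∪ N(Z) ∪ (X \ Z)`, whose size is submodular in `Z`; hence the source sides of
minimum boundary size `λ` are closed under union and have a greatest element `Zs`, and the
uncrossing argument shows that every counted `W` keeps everything reachable from `X ∪ P` in
`G - boundary Zs` reachable. If `λ = |F|`, then `F` separates and is the only candidate. Otherwise
pick `v ∉ F` on the boundary of that reachable set: either `v ∈ W` (add `v` to `F`), or `v` is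
reachable in `G - W` (add `v` to `P`, which raises `λ` because `Zs` was the greatest minimum
side). Both branches decrease `2k - (λ + |F|) ≤ 2k`, so there are at most `2 ^ (2k)` leaves.
-/

open SimpleGraph

namespace ImportantSeparator

section SourceSide

variable {V : Type*} [DecidableEq V] {Y F P Z₁ Z₂ : Finset V}

def IsSourceSide (Y F P Z : Finset V) : Prop :=
  Disjoint Z Y ∧ Disjoint Z F ∧ P ⊆ Z

theorem IsSourceSide.union (h₁ : IsSourceSide Y F P Z₁) (h₂ : IsSourceSide Y F P Z₂) :
    IsSourceSide Y F P (Z₁ ∪ Z₂) :=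
  ⟨Finset.disjoint_union_left.2 ⟨h₁.1, h₂.1⟩, Finset.disjoint_union_left.2 ⟨h₁.2.1, h₂.2.1⟩,
    h₁.2.2.trans Finset.subset_union_left⟩

theorem IsSourceSide.inter (h₁ : IsSourceSide Y F P Z₁) (h₂ : IsSourceSide Y F P Z₂) :
    IsSourceSide Y F P (Z₁ ∩ Z₂) :=
  ⟨Finset.disjoint_of_subset_left Finset.inter_subset_left h₁.1,
    Finset.disjoint_of_subset_left Finset.inter_subset_left h₁.2.1,
    Finset.subset_inter h₁.2.2 h₂.2.2⟩

end SourceSide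

section Reach

variable {V : Type*} [Fintype V] {G : SimpleGraph V}

open Classical in
noncomputable def reach (G : SimpleGraph V) (W A : Finset V) : Finset V :=
  {y | ∃ x ∈ A, AvoidReach G W x y}

variable {X Y F P W W' A Z : Finset V} {u v : V}

theorem mem_reach : v ∈ reach G W A ↔ ∃ x ∈ A, AvoidReach G W x v := by
  simp [reach]

theorem coe_reach : (reach G W A : Set V) = ReachSet G W A := by
  ext; simp [mem_reach, ReachSet]

theorem isSepSet_iff_disjoint_reach : IsSepSet G W X Y ↔ Disjoint (reach G W X) Y := by
  simp only [IsSepSet, Finset.disjoint_left, mem_reach]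
  grind

theorem notMem_of_mem_reach (hv : v ∈ reach G W A) : v ∉ W := by
  obtain ⟨x, -, p, hp⟩ := mem_reach.1 hv
  exact hp v p.end_mem_support

theorem disjoint_reach : Disjoint (reach G W A) W :=
  Finset.disjoint_left.2 fun _ => notMem_of_mem_reach

theorem mem_reach_of_mem (hv : v ∈ A) (hvW : v ∉ W) : v ∈ reach G W A :=
  mem_reach.2 ⟨v, hv, .nil, by simpa⟩

theorem mem_reach_of_adj (hu : u ∈ reach G W A) (huv : G.Adj u v) (hvW : v ∉ W) :
    v ∈ reach G W A := by
  obtain ⟨x, hx, p, hp⟩ := mem_reach.1 hu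
  refine mem_reach.2 ⟨x, hx, p.concat huv, ?_⟩
  simp only [Walk.support_concat, List.mem_append, List.mem_singleton]
  rintro w (hw | rfl)
  exacts [hp w hw, hvW]

theorem mem_reach_of_mem_support [DecidableEq V] {x y : V} (hx : x ∈ A) (p : G.Walk x y)
    (hp : ∀ w ∈ p.support, w ∉ W) (hu : u ∈ p.support) : u ∈ reach G W A :=
  mem_reach.2 ⟨x, hx, p.takeUntil u hu,
    fun w hw => hp w (p.support_takeUntil_subset_support hu hw)⟩

theorem reach_union_of_subset [DecidableEq V] (hP : P ⊆ reach G W A) :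
    reach G W (A ∪ P) = reach G W A := by
  refine subset_antisymm (fun v hv => ?_) (fun v hv => ?_)
  · obtain ⟨x, hx, q, hq⟩ := mem_reach.1 hv
    rcases Finset.mem_union.1 hx with hx | hx
    · exact mem_reach.2 ⟨x, hx, q, hq⟩
    obtain ⟨a, ha, p, hp⟩ := mem_reach.1 (hP hx)
    refine mem_reach.2 ⟨a, ha, p.append q, fun w hw => ?_⟩
    rcases (Walk.mem_support_append_iff p q).1 hw with hw | hw
    exacts [hp w hw, hq w hw]
  · obtain ⟨x, hx, hr⟩ := mem_reach.1 hv
    exact mem_reach.2 ⟨x, Finset.mem_union_left _ hx, hr⟩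

theorem reach_subset_of_adj_mem (hA : ∀ a ∈ A, a ∉ W → a ∈ Z)
    (hN : ∀ c ∈ Z, ∀ v, G.Adj c v → v ∉ W → v ∈ Z) : reach G W A ⊆ Z := by
  intro y hy
  obtain ⟨x, hx, p, hp⟩ := mem_reach.1 hy
  by_contra hyZ
  obtain ⟨d, hd, hd₁, hd₂⟩ :=
    p.exists_boundary_dart (↑Z) (hA x hx (hp x p.start_mem_support)) hyZ
  exact hd₂ (hN _ hd₁ _ d.adj (hp _ (p.dart_snd_mem_support_of_mem_darts hd)))

theorem reach_subset_reach [DecidableEq V] (h : reach G W A ⊆ Z) (hZ : Disjoint Z W') :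
    reach G W A ⊆ reach G W' A := by
  intro v hv
  obtain ⟨x, hx, p, hp⟩ := mem_reach.1 hv
  exact mem_reach.2 ⟨x, hx, p, fun w hw =>
    Finset.disjoint_left.1 hZ (h (mem_reach_of_mem_support hx p hp hw))⟩

theorem isSourceSide_reach (hW : IsSepSet G W X Y) (hF : F ⊆ W) (hP : P ⊆ reach G W X) :
    IsSourceSide Y F P (reach G W X) :=
  ⟨isSepSet_iff_disjoint_reach.1 hW, Finset.disjoint_of_subset_right hF disjoint_reach, hP⟩

end Reach

section Boundary

variable {V : Type*} [Fintype V] [DecidableEq V] {G : SimpleGraph V}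
  {X Y F P W Z Z₁ Z₂ : Finset V} {v : V}

open Classical in
noncomputable def boundary (G : SimpleGraph V) (X F Z : Finset V) : Finset V :=
  F ∪ ({v | v ∉ Z ∧ (v ∈ X ∨ ∃ c ∈ Z, G.Adj c v)} : Finset V)

theorem mem_boundary :
    v ∈ boundary G X F Z ↔ v ∈ F ∨ v ∉ Z ∧ (v ∈ X ∨ ∃ c ∈ Z, G.Adj c v) := by
  simp [boundary]

theorem subset_boundary : F ⊆ boundary G X F Z :=
  Finset.subset_union_left

theorem boundary_mono {F' : Finset V} (h : F ⊆ F') : boundary G X F Z ⊆ boundary G X F' Z :=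
  Finset.union_subset_union_left h

theorem disjoint_boundary (hZ : Disjoint Z F) : Disjoint Z (boundary G X F Z) := by
  rw [Finset.disjoint_left] at hZ ⊢
  intro v hv hvb
  rcases mem_boundary.1 hvb with h | h
  exacts [hZ hv h, h.1 hv]

theorem card_boundary_union_add_card_boundary_inter_le :
    (boundary G X F (Z₁ ∪ Z₂)).card + (boundary G X F (Z₁ ∩ Z₂)).card ≤
      (boundary G X F Z₁).card + (boundary G X F Z₂).card := by
  rw [← Finset.card_union_add_card_inter, ← Finset.card_union_add_card_inter (boundary G X F Z₁)]
  refine Nat.add_le_add (Finset.card_le_card fun v => ?_) (Finset.card_le_card fun v => ?_) <;>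
  · simp only [Finset.mem_union, Finset.mem_inter, mem_boundary]
    grind

theorem reach_boundary_subset {A : Finset V} (hA : A ⊆ X ∪ Z) :
    reach G (boundary G X F Z) A ⊆ Z := by
  refine reach_subset_of_adj_mem (fun a ha hab => ?_) (fun c hc v hcv hvb => ?_)
  · by_contra haZ
    have haX : a ∈ X := by simpa [haZ] using hA ha
    exact hab (mem_boundary.2 (Or.inr ⟨haZ, Or.inl haX⟩))
  · by_contra hvZ
    exact hvb (mem_boundary.2 (Or.inr ⟨hvZ, Or.inr ⟨c, hc, hcv⟩⟩))

theorem isSepSet_boundary (hZ : Disjoint Z Y) : IsSepSet G (boundary G X F Z) X Y :=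
  isSepSet_iff_disjoint_reach.2 <|
    Finset.disjoint_of_subset_left (reach_boundary_subset Finset.subset_union_left) hZ

theorem boundary_reach_subset {A : Finset V} (hF : F ⊆ W) (hX : X ⊆ A) :
    boundary G X F (reach G W A) ⊆ W := by
  intro v hv
  by_contra hvW
  rcases mem_boundary.1 hv with hvF | ⟨hvR, hvX | ⟨c, hc, hcv⟩⟩
  · exact hvW (hF hvF)
  · exact hvR (mem_reach_of_mem (hX hvX) hvW)
  · exact hvR (mem_reach_of_adj hc hcv hvW)

theorem boundary_subset_of_subset_reach (h : Z ⊆ reach G W X) :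
    boundary G X F Z ⊆ F ∪ W ∪ reach G W X := by
  intro v hv
  rw [Finset.mem_union, Finset.mem_union]
  by_cases hvW : v ∈ W
  · exact Or.inl (Or.inr hvW)
  rcases mem_boundary.1 hv with hvF | ⟨-, hvX | ⟨c, hc, hcv⟩⟩
  · exact Or.inl (Or.inl hvF)
  · exact Or.inr (mem_reach_of_mem hvX hvW)
  · exact Or.inr (mem_reach_of_adj (h hc) hcv hvW)

theorem IsSourceSide.reach_boundary (hZ : IsSourceSide Y F P Z) :
    IsSourceSide Y F P (reach G (boundary G X F Z) (X ∪ P)) := by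
  have hsub : reach G (boundary G X F Z) (X ∪ P) ⊆ Z :=
    reach_boundary_subset (Finset.union_subset_union_right hZ.2.2)
  refine ⟨Finset.disjoint_of_subset_left hsub hZ.1,
    Finset.disjoint_of_subset_left hsub hZ.2.1, fun p hp => ?_⟩
  exact mem_reach_of_mem (Finset.mem_union_right _ hp)
    (Finset.disjoint_left.1 (disjoint_boundary hZ.2.1) (hZ.2.2 hp))

end Boundary

section MinSide

variable {V : Type*} [Fintype V] [DecidableEq V] {G : SimpleGraph V}
  {X Y F P Z Zs : Finset V}

def IsMinSourceSide (G : SimpleGraph V) (X Y F P Z : Finset V) : Prop :=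
  IsSourceSide Y F P Z ∧
    ∀ Z', IsSourceSide Y F P Z' → (boundary G X F Z).card ≤ (boundary G X F Z').card

theorem IsMinSourceSide.card_boundary_union_le (hZs : IsMinSourceSide G X Y F P Zs)
    (hZ : IsSourceSide Y F P Z) : (boundary G X F (Z ∪ Zs)).card ≤ (boundary G X F Z).card := by
  have := hZs.2 _ (hZ.inter hZs.1)
  have := card_boundary_union_add_card_boundary_inter_le (G := G) (X := X) (F := F) (Z₁ := Z)
    (Z₂ := Zs)
  omega

theorem IsMinSourceSide.union {Z' : Finset V} (hZ : IsMinSourceSide G X Y F P Z)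
    (hZ' : IsMinSourceSide G X Y F P Z') : IsMinSourceSide G X Y F P (Z ∪ Z') :=
  ⟨hZ.1.union hZ'.1, fun _ h => (hZ'.card_boundary_union_le hZ.1).trans (hZ.2 _ h)⟩

open Classical in
theorem exists_isGreatest_isMinSourceSide (h : ∃ Z, IsSourceSide Y F P Z) :
    ∃ Zs, IsGreatest {Z | IsMinSourceSide G X Y F P Z} Zs := by
  obtain ⟨Z₀, hZ₀, hmin⟩ := Finset.exists_min_image (Finset.univ.filter (IsSourceSide Y F P))
    (fun Z => (boundary G X F Z).card) (by simpa [Finset.filter_nonempty_iff] using h)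
  set S := Finset.univ.filter (IsMinSourceSide G X Y F P)
  have hS : S.Nonempty := ⟨Z₀, by simp_all [S, IsMinSourceSide]⟩
  refine ⟨S.sup' hS id, ?_, fun Z hZ => Finset.le_sup' id (by simpa [S] using hZ)⟩
  simpa [S] using Finset.sup'_induction hS id (p := (· ∈ S))
    (fun _ h₁ _ h₂ => by simp_all [S, IsMinSourceSide.union]) fun _ => id

end MinSide

section Count

variable {V : Type*} [Fintype V] [DecidableEq V] {G : SimpleGraph V}
  {X Y F P W Zs : Finset V} {k : ℕ} {v : V}

theorem _root_.IsImpSep.reach_eq_of_subset {W' : Finset V} (hW : IsImpSep G X Y W)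
    (hW' : IsSepSet G W' X Y) (hcard : W'.card ≤ W.card) (h : reach G W X ⊆ reach G W' X) :
    reach G W' X = reach G W X := by
  by_contra hne
  refine hW.2.2 W' hW' hcard ?_
  rw [← coe_reach, ← coe_reach, Finset.coe_ssubset]
  exact Finset.ssubset_iff_subset_ne.2 ⟨h, Ne.symm hne⟩

theorem _root_.IsImpSep.reach_boundary_subset_reach (hW : IsImpSep G X Y W) (hF : F ⊆ W)
    (hP : P ⊆ reach G W X) (hZs : IsMinSourceSide G X Y F P Zs) :
    reach G (boundary G X F Zs) (X ∪ P) ⊆ reach G W X := by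
  set R := reach G W X
  have hR : IsSourceSide Y F P R := isSourceSide_reach hW.1 hF hP
  set S := boundary G X F (R ∪ Zs)
  have hRS : Disjoint (R ∪ Zs) S := disjoint_boundary (hR.union hZs.1).2.1
  have hSW : S.card ≤ W.card := (hZs.card_boundary_union_le hR).trans
    (Finset.card_le_card (boundary_reach_subset hF subset_rfl))
  have hSR : reach G S X = R := hW.reach_eq_of_subset (isSepSet_boundary (hR.union hZs.1).1) hSW
    (reach_subset_reach Finset.subset_union_left hRS)
  calc reach G (boundary G X F Zs) (X ∪ P)
      ⊆ reach G S (X ∪ P) := reach_subset_reach ((reach_boundary_subset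
          (Finset.union_subset_union_right hZs.1.2.2)).trans Finset.subset_union_right) hRS
    _ = R := by rw [reach_union_of_subset (hP.trans hSR.ge), hSR]

def branchSet (G : SimpleGraph V) (X Y : Finset V) (k : ℕ) (F P : Finset V) :
    Set (Finset V) :=
  {W | IsImpSep G X Y W ∧ W.card ≤ k ∧ F ⊆ W ∧ P ⊆ reach G W X}

theorem branchSet_subset_singleton (hF : IsSepSet G F X Y) :
    branchSet G X Y k F P ⊆ {F} := by
  intro W hW
  by_contra hne
  exact hW.1.2.1 F hW.2.2.1 (Ne.symm hne) hF

theorem branchSet_subset_union (hv : ∀ W ∈ branchSet G X Y k F P, v ∉ W → v ∈ reach G W X) :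
    branchSet G X Y k F P ⊆
      branchSet G X Y k (insert v F) P ∪ branchSet G X Y k F (insert v P) := by
  intro W hW
  by_cases hvW : v ∈ W
  · exact Or.inl ⟨hW.1, hW.2.1, Finset.insert_subset hvW hW.2.2.1, hW.2.2.2⟩
  · exact Or.inr ⟨hW.1, hW.2.1, hW.2.2.1, Finset.insert_subset (hv W hW hvW) hW.2.2.2⟩

theorem exists_branching_vertex (hZs : IsGreatest {Z | IsMinSourceSide G X Y F P Z} Zs)
    (hF : F.card < (boundary G X F Zs).card) :
    ∃ v ∉ F, (∀ W ∈ branchSet G X Y k F P, v ∉ W → v ∈ reach G W X) ∧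
      ∀ Z, IsSourceSide Y F (insert v P) Z →
        (boundary G X F Zs).card < (boundary G X F Z).card := by
  set C := reach G (boundary G X F Zs) (X ∪ P)
  have hC : IsSourceSide Y F P C := hZs.1.1.reach_boundary
  obtain ⟨v, hvC, hvF⟩ : ∃ v ∈ boundary G X F C, v ∉ F := by
    by_contra! h
    exact (hF.trans_le (hZs.1.2 C hC)).not_ge (Finset.card_le_card h)
  have hvZs : v ∉ Zs := fun hv => Finset.disjoint_left.1 (disjoint_boundary hZs.1.1.2.1) hv
    (boundary_reach_subset subset_boundary Finset.subset_union_left hvC)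
  refine ⟨v, hvF, fun W hW hvW => ?_, fun Z hZ => ?_⟩
  · have := boundary_subset_of_subset_reach (F := F)
      (hW.1.reach_boundary_subset_reach hW.2.2.1 hW.2.2.2 hZs.1) hvC
    simpa [hvF, hvW] using this
  · by_contra! hle
    have hZP : IsSourceSide Y F P Z := ⟨hZ.1, hZ.2.1, (Finset.subset_insert _ _).trans hZ.2.2⟩
    exact hvZs (hZs.2 ⟨hZP, fun Z' hZ' => hle.trans (hZs.1.2 Z' hZ')⟩
      (hZ.2.2 (Finset.mem_insert_self _ _)))

theorem ncard_branchSet_le (k c : ℕ) (F P : Finset V)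
    (hc : ∀ Z, IsSourceSide Y F P Z → c ≤ (boundary G X F Z).card) :
    (branchSet G X Y k F P).ncard ≤ 2 ^ (2 * k - (c + F.card)) := by
  induction hm : 2 * k - (c + F.card) using Nat.strong_induction_on generalizing c F P with
  | _ m ih =>
  rcases (branchSet G X Y k F P).eq_empty_or_nonempty with hempty | ⟨W₀, hW₀⟩
  · simp [hempty]
  have hR₀ := isSourceSide_reach hW₀.1.1 hW₀.2.2.1 hW₀.2.2.2
  obtain ⟨Zs, hZs⟩ := exists_isGreatest_isMinSourceSide (G := G) (X := X) ⟨_, hR₀⟩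
  set b := (boundary G X F Zs).card
  have hcb : c ≤ b := hc Zs hZs.1.1
  have hbk : b ≤ k := (hZs.1.2 _ hR₀).trans <|
    (Finset.card_le_card (boundary_reach_subset hW₀.2.2.1 subset_rfl)).trans hW₀.2.1
  by_cases hdeg : b ≤ F.card
  · have hFsep : IsSepSet G F X Y := by
      rw [Finset.eq_of_subset_of_card_le subset_boundary hdeg]
      exact isSepSet_boundary hZs.1.1.1
    calc (branchSet G X Y k F P).ncard ≤ ({F} : Set (Finset V)).ncard :=
          Set.ncard_le_ncard (branchSet_subset_singleton hFsep)
      _ ≤ 2 ^ m := by simp [Nat.one_le_two_pow]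
  obtain ⟨v, hvF, hsplit, hvP⟩ := exists_branching_vertex (k := k) hZs (not_le.1 hdeg)
  have hboundF : ∀ Z, IsSourceSide Y (insert v F) P Z →
      b ≤ (boundary G X (insert v F) Z).card := fun Z hZ =>
    have hZF : IsSourceSide Y F P Z :=
      ⟨hZ.1, Finset.disjoint_of_subset_right (Finset.subset_insert _ _) hZ.2.1, hZ.2.2⟩
    (hZs.1.2 Z hZF).trans (Finset.card_le_card (boundary_mono (Finset.subset_insert _ _)))
  have hcardF : (insert v F).card = F.card + 1 := Finset.card_insert_of_notMem hvF
  have hF := ih _ (by omega) b (insert v F) P hboundF rfl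
  have hP := ih _ (by omega) (b + 1) F (insert v P) hvP rfl
  rw [hcardF] at hF
  calc (branchSet G X Y k F P).ncard
      ≤ (branchSet G X Y k (insert v F) P ∪ branchSet G X Y k F (insert v P)).ncard :=
        Set.ncard_le_ncard (branchSet_subset_union hsplit)
    _ ≤ (branchSet G X Y k (insert v F) P).ncard + (branchSet G X Y k F (insert v P)).ncard :=
        Set.ncard_union_le _ _
    _ ≤ 2 ^ (2 * k - (b + (F.card + 1))) + 2 ^ (2 * k - (b + 1 + F.card)) := add_le_add hF hP
    _ = 2 ^ (2 * k - (b + (F.card + 1)) + 1) := by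
        rw [add_right_comm b 1, ← add_assoc, pow_succ, mul_two]
    _ ≤ 2 ^ m := Nat.pow_le_pow_right two_pos (by omega)

end Count

end ImportantSeparator

/-- for any two vertex sets `X`, `Y` and any `k`, there are at most `4^k`
important `X`-`Y` separators of size at most `k`. -/
theorem impSep_count (G : SimpleGraph V) (X Y : Finset V) (k : ℕ) :
    {W : Finset V | IsImpSep G X Y W ∧ W.card ≤ k}.ncard ≤ 4 ^ k := by
  have hset : {W : Finset V | IsImpSep G X Y W ∧ W.card ≤ k} =
      ImportantSeparator.branchSet G X Y k ∅ ∅ := by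
    ext W
    simp [ImportantSeparator.branchSet]
  rw [hset, show 4 ^ k = 2 ^ (2 * k) by rw [pow_mul]; norm_num]
  simpa using ImportantSeparator.ncard_branchSet_le (G := G) (X := X) (Y := Y) k 0 ∅ ∅
    fun _ _ => Nat.zero_le _
end

section
/- Let Λ be a finite label set and (G,ι), (G₁,ι₁), (G₂,ι₂) be Λ-boundaried graphs such that (G₁,ι₁) and (G₂,ι₂) have the same weak cut signature. Then for all vertex subsets X, Y ⊆ V(G), the minimum order of an X-Y separation in (G,ι) ⊕ (G₁,ι₁) equals the minimum order of an X-Y separation in (G,ι) ⊕ (G₂,ι₂). -/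
open Finset

variable {V : Type*} [Fintype V] [DecidableEq V]

/-! A separation `(A, B)` of `H ⊕ H₁` restricts to a separation of `H₁` that splits the labels
as `(A, B)` does. Equal weak cut signatures provide a separation of `H₂` of no larger order that
splits the labels in the same way; they also force `H₁` and `H₂` to use the same labels (compare
the signatures at `(Λ, {l})` with order `0`). Replacing the `H₁`-part of `(A, B)` by it gives a
separation of `H ⊕ H₂` with `X` and `Y` on the same sides. Its separator consists of the
separator of the `H₂`-part together with the separator vertices private to `H`, which are the
same as before. -/

section Separation

variable {α β : Type*} [Fintype α] [DecidableEq α] [Fintype β] [DecidableEq β]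
  {G : SimpleGraph α} {K : SimpleGraph β} {A B : Finset β}

theorem IsSep.mem_or (h : IsSep K A B) (w : β) : w ∈ A ∨ w ∈ B :=
  mem_union.1 (h.1 ▸ mem_univ w)

theorem IsSep.mem_left_of_notMem_right (h : IsSep K A B) {w : β} (hw : w ∉ B) : w ∈ A :=
  (h.mem_or w).resolve_right hw

theorem IsSep.mem_right_of_notMem_left (h : IsSep K A B) {w : β} (hw : w ∉ A) : w ∈ B :=
  (h.mem_or w).resolve_left hw

theorem IsSep.comap (φ : G →g K) (h : IsSep K A B) : IsSep G {a | φ a ∈ A} {a | φ a ∈ B} := by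
  refine ⟨eq_univ_of_forall fun a => ?_, fun a ha haB b hb hbA hab => ?_⟩
  · simpa only [mem_union, mem_filter_univ] using h.mem_or (φ a)
  · simp only [mem_filter_univ] at ha haB hb hbA
    exact h.2 _ ha haB _ hb hbA (φ.map_adj hab)

end Separation

namespace BGraph

variable {Λ α : Type*} [Fintype Λ] [Fintype α] [DecidableEq α] (H : BGraph Λ α)

def labelsIn (A : Finset α) : Finset Λ := {l | ∀ v, H.bd l = some v → v ∈ A}

theorem labelsIn_union_labelsIn [DecidableEq Λ] {A B : Finset α} (h : A ∪ B = univ) :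
    H.labelsIn A ∪ H.labelsIn B = univ := by
  refine eq_univ_of_forall fun l => ?_
  simp only [labelsIn, mem_union, mem_filter_univ]
  cases hl : H.bd l with
  | none => simp
  | some v => simpa only [Option.some.injEq, forall_eq'] using mem_union.1 (h ▸ mem_univ v)

theorem weakSigLE_labelsIn {A B : Finset α} (h : IsSep H.G A B) :
    WeakSigLE H (H.labelsIn A) (H.labelsIn B) (A ∩ B).card :=
  ⟨A, B, h, fun l hl => (mem_filter_univ l).1 hl, fun l hl => (mem_filter_univ l).1 hl, le_rfl⟩

theorem weakSigLE_univ_singleton_zero_iff [DecidableEq Λ] (l : Λ) :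
    WeakSigLE H univ {l} 0 ↔ H.bd l = none := by
  constructor
  · rintro ⟨A, B, -, hA, hB, h0⟩
    cases hl : H.bd l with
    | none => rfl
    | some v =>
      have hv : v ∈ A ∩ B :=
        mem_inter.2 ⟨hA l (mem_univ l) v hl, hB l (mem_singleton_self l) v hl⟩
      exact absurd (card_pos.2 ⟨v, hv⟩) (by omega)
  · intro hl
    refine ⟨univ, ∅, ⟨by simp, by simp⟩, by simp, ?_, by simp⟩
    simp [hl]

end BGraph

namespace SameWeakSig

variable {Λ V₁ V₂ : Type*} [Fintype Λ] [DecidableEq Λ] [Fintype V₁] [DecidableEq V₁]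
  [Fintype V₂] [DecidableEq V₂] {H₁ : BGraph Λ V₁} {H₂ : BGraph Λ V₂}

theorem symm (h : SameWeakSig H₁ H₂) : SameWeakSig H₂ H₁ :=
  fun A' B' hAB n => (h A' B' hAB n).symm

theorem bd_eq_none_iff (h : SameWeakSig H₁ H₂) (l : Λ) : H₁.bd l = none ↔ H₂.bd l = none := by
  rw [← H₁.weakSigLE_univ_singleton_zero_iff, ← H₂.weakSigLE_univ_singleton_zero_iff]
  exact h univ {l} (by simp) 0

end SameWeakSig

namespace IsGluing

section

variable {Λ V V' W : Type*} {H : BGraph Λ V} {H' : BGraph Λ V'} {K : SimpleGraph W}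
  {f : V → W} {g : V' → W}

def homLeft (hK : IsGluing H H' K f g) : H.G →g K :=
  ⟨f, fun hab => (hK.2.2.2.2 _ _).2 (Or.inl ⟨_, _, rfl, rfl, hab⟩)⟩

def homRight (hK : IsGluing H H' K f g) : H'.G →g K :=
  ⟨g, fun hab => (hK.2.2.2.2 _ _).2 (Or.inr ⟨_, _, rfl, rfl, hab⟩)⟩

theorem exists_eq_iff (hK : IsGluing H H' K f g) (a : V) :
    (∃ c, g c = f a) ↔ ∃ l, H.bd l = some a ∧ H'.bd l ≠ none := by
  simp only [eq_comm (a := g _), hK.2.2.2.1, Option.ne_none_iff_exists']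
  exact ⟨fun ⟨c, l, ha, hc⟩ => ⟨l, ha, c, hc⟩, fun ⟨l, ha, c, hc⟩ => ⟨c, l, ha, hc⟩⟩

variable [DecidableEq W]

/-- Every vertex of the gluing comes from `H'`, or else from `H` only. -/
theorem card_eq [Fintype V] [Fintype V'] (hK : IsGluing H H' K f g) (T : Finset W) :
    T.card = #{c | g c ∈ T} + #{a | f a ∈ T ∧ ∀ c, g c ≠ f a} := by
  have hT : T = ({c | g c ∈ T} : Finset V').image g ∪
      ({a | f a ∈ T ∧ ∀ c, g c ≠ f a} : Finset V).image f := by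
    ext w
    simp only [mem_union, mem_image, mem_filter_univ]
    constructor
    · intro hw
      by_cases hg : ∃ c, g c = w
      · obtain ⟨c, rfl⟩ := hg
        exact Or.inl ⟨c, hw, rfl⟩
      · obtain ⟨a, rfl⟩ | hg' := hK.2.2.1 w
        · push Not at hg
          exact Or.inr ⟨a, ⟨hw, hg⟩, rfl⟩
        · exact absurd hg' hg
    · rintro (⟨c, hc, rfl⟩ | ⟨a, ⟨ha, -⟩, rfl⟩) <;> assumption
  conv_lhs => rw [hT]
  rw [card_union_of_disjoint, card_image_of_injective _ hK.2.1, card_image_of_injective _ hK.1]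
  rw [disjoint_left]
  rintro _ hc ha
  obtain ⟨c, -, rfl⟩ := mem_image.1 hc
  obtain ⟨a, ha, hac⟩ := mem_image.1 ha
  exact (mem_filter_univ a).1 ha |>.2 c hac.symm

/-- A vertex on a strict side of the union lies on that strict side of each separation it
comes from. -/
theorem isSep_image_union [Fintype V] [DecidableEq V] [Fintype V'] [DecidableEq V']
    [Fintype W] (hK : IsGluing H H' K f g) {P Q : Finset V} {P' Q' : Finset V'}
    (h : IsSep H.G P Q) (h' : IsSep H'.G P' Q') :
    IsSep K (P.image f ∪ P'.image g) (Q.image f ∪ Q'.image g) := by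
  refine ⟨eq_univ_of_forall fun w => ?_, fun x hx hxB y hy hyA hxy => ?_⟩
  · obtain ⟨a, rfl⟩ | ⟨c, rfl⟩ := hK.2.2.1 w
    · obtain ha | ha := h.mem_or a
      · exact mem_union_left _ (mem_union_left _ (mem_image_of_mem f ha))
      · exact mem_union_right _ (mem_union_left _ (mem_image_of_mem f ha))
    · obtain hc | hc := h'.mem_or c
      · exact mem_union_left _ (mem_union_right _ (mem_image_of_mem g hc))
      · exact mem_union_right _ (mem_union_right _ (mem_image_of_mem g hc))
  · simp only [mem_union, mem_image, not_or, not_exists, not_and] at hx hxB hy hyA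
    obtain ⟨a, b, rfl, rfl, hab⟩ | ⟨c, d, rfl, rfl, hcd⟩ := (hK.2.2.2.2 x y).1 hxy
    · have ha : a ∉ Q := fun ha => hxB.1 a ha rfl
      have hb : b ∉ P := fun hb => hyA.1 b hb rfl
      exact h.2 a (h.mem_left_of_notMem_right ha) ha b (h.mem_right_of_notMem_left hb) hb hab
    · have hc : c ∉ Q' := fun hc => hxB.2 c hc rfl
      have hd : d ∉ P' := fun hd => hyA.2 d hd rfl
      exact h'.2 c (h'.mem_left_of_notMem_right hc) hc d (h'.mem_right_of_notMem_left hd) hd hcd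

theorem mem_image_union_left (hK : IsGluing H H' K f g) (P : Finset V) (P' : Finset V')
    {a : V} (ha : ∀ c, g c ≠ f a) : f a ∈ P.image f ∪ P'.image g ↔ a ∈ P := by
  simp only [mem_union, mem_image, hK.1.eq_iff, exists_eq_right]
  exact or_iff_left fun ⟨c, _, hc⟩ => ha c hc

theorem mem_image_union_right (hK : IsGluing H H' K f g) {P : Finset V} {P' : Finset V'}
    (hP : ∀ a c, f a = g c → a ∈ P → c ∈ P') (c : V') :
    g c ∈ P.image f ∪ P'.image g ↔ c ∈ P' := by
  simp only [mem_union, mem_image, hK.2.1.eq_iff, exists_eq_right]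
  exact or_iff_right_of_imp fun ⟨a, ha, hac⟩ => hP a c hac ha

end

section

variable {Λ V₀ V₁ V₂ W₁ W₂ : Type*} [Fintype Λ] [DecidableEq Λ]
  [Fintype V₁] [DecidableEq V₁] [Fintype V₂] [DecidableEq V₂]
  {H : BGraph Λ V₀} {H₁ : BGraph Λ V₁} {H₂ : BGraph Λ V₂}
  {K₁ : SimpleGraph W₁} {f₁ : V₀ → W₁} {g₁ : V₁ → W₁}
  {K₂ : SimpleGraph W₂} {f₂ : V₀ → W₂} {g₂ : V₂ → W₂}

theorem exists_eq_iff_of_sameWeakSig (hsig : SameWeakSig H₁ H₂)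
    (hK₁ : IsGluing H H₁ K₁ f₁ g₁) (hK₂ : IsGluing H H₂ K₂ f₂ g₂) (a : V₀) :
    (∃ c, g₁ c = f₁ a) ↔ ∃ c, g₂ c = f₂ a := by
  simp only [hK₁.exists_eq_iff, hK₂.exists_eq_iff, ne_eq, hsig.bd_eq_none_iff]

/-- A vertex of `H` shared with `H₂` carries a label that `H₁` also uses. -/
theorem mem_of_forall_labelsIn [DecidableEq W₁] (hsig : SameWeakSig H₁ H₂)
    (hK₁ : IsGluing H H₁ K₁ f₁ g₁) (hK₂ : IsGluing H H₂ K₂ f₂ g₂)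
    {S : Finset W₁} {S₂ : Finset V₂}
    (hS : ∀ l ∈ H₁.labelsIn {v | g₁ v ∈ S}, ∀ c, H₂.bd l = some c → c ∈ S₂)
    {a : V₀} {c : V₂} (hac : f₂ a = g₂ c) (ha : f₁ a ∈ S) : c ∈ S₂ := by
  obtain ⟨l, hla, hlc⟩ := (hK₂.2.2.2.1 a c).1 hac
  obtain ⟨v, hlv⟩ : ∃ v, H₁.bd l = some v :=
    Option.ne_none_iff_exists'.1 ((hsig.bd_eq_none_iff l).not.2 (by simp [hlc]))
  have hav : f₁ a = g₁ v := (hK₁.2.2.2.1 a v).2 ⟨l, hla, hlv⟩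
  refine hS l ?_ c hlc
  simp only [BGraph.labelsIn, mem_filter_univ, hlv, Option.some.injEq, forall_eq']
  exact hav ▸ ha

variable [Fintype V₀] [DecidableEq V₀] [Fintype W₁] [DecidableEq W₁] [Fintype W₂] [DecidableEq W₂]

theorem exists_isSep_of_sameWeakSig (hsig : SameWeakSig H₁ H₂)
    (hK₁ : IsGluing H H₁ K₁ f₁ g₁) (hK₂ : IsGluing H H₂ K₂ f₂ g₂)
    {A B : Finset W₁} (hAB : IsSep K₁ A B) :
    ∃ A' B' : Finset W₂, IsSep K₂ A' B' ∧ (∀ a, f₁ a ∈ A → f₂ a ∈ A') ∧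
      (∀ a, f₁ a ∈ B → f₂ a ∈ B') ∧ #(A' ∩ B') ≤ #(A ∩ B) := by
  have hA₁B₁ : IsSep H₁.G {v | g₁ v ∈ A} {v | g₁ v ∈ B} := hAB.comap hK₁.homRight
  obtain ⟨A₂, B₂, hA₂B₂, hA₂, hB₂, hcard⟩ :=
    (hsig _ _ (H₁.labelsIn_union_labelsIn hA₁B₁.1) _).1 (H₁.weakSigLE_labelsIn hA₁B₁)
  set P : Finset V₀ := {a | f₁ a ∈ A}
  set Q : Finset V₀ := {a | f₁ a ∈ B}
  have hPQ : IsSep H.G P Q := hAB.comap hK₁.homLeft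
  refine ⟨P.image f₂ ∪ A₂.image g₂, Q.image f₂ ∪ B₂.image g₂, hK₂.isSep_image_union hPQ hA₂B₂,
    fun a ha => mem_union_left _ (mem_image_of_mem f₂ ((mem_filter_univ a).2 ha)),
    fun a hb => mem_union_left _ (mem_image_of_mem f₂ ((mem_filter_univ a).2 hb)), ?_⟩
  have hPA₂ : ∀ a c, f₂ a = g₂ c → a ∈ P → c ∈ A₂ :=
    fun a c hac ha => mem_of_forall_labelsIn hsig hK₁ hK₂ hA₂ hac ((mem_filter_univ a).1 ha)
  have hQB₂ : ∀ a c, f₂ a = g₂ c → a ∈ Q → c ∈ B₂ :=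
    fun a c hac hb => mem_of_forall_labelsIn hsig hK₁ hK₂ hB₂ hac ((mem_filter_univ a).1 hb)
  have hshared : ({c | g₂ c ∈ (P.image f₂ ∪ A₂.image g₂) ∩ (Q.image f₂ ∪ B₂.image g₂)} :
      Finset V₂) = A₂ ∩ B₂ := by
    ext c
    simp only [mem_filter_univ, mem_inter, hK₂.mem_image_union_right hPA₂,
      hK₂.mem_image_union_right hQB₂]
  have hprivate : ({a | f₂ a ∈ (P.image f₂ ∪ A₂.image g₂) ∩ (Q.image f₂ ∪ B₂.image g₂) ∧
      ∀ c, g₂ c ≠ f₂ a} : Finset V₀) = ({a | f₁ a ∈ A ∩ B ∧ ∀ c, g₁ c ≠ f₁ a} : Finset V₀) := by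
    ext a
    have hiff : (∀ c, g₂ c ≠ f₂ a) ↔ ∀ c, g₁ c ≠ f₁ a := by
      simpa only [not_exists] using (exists_eq_iff_of_sameWeakSig hsig hK₁ hK₂ a).not.symm
    by_cases ha : ∀ c, g₁ c ≠ f₁ a
    · simp only [mem_filter_univ, mem_inter, hK₂.mem_image_union_left _ _ (hiff.2 ha), hiff,
        P, Q]
    · simp only [mem_filter_univ, ha, hiff, and_false]
  rw [hK₁.card_eq (A ∩ B), hK₂.card_eq, hshared, hprivate]
  refine Nat.add_le_add_right (hcard.trans_eq (congrArg card ?_)) _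
  ext v
  simp only [mem_filter_univ, mem_inter]

end

end IsGluing

/-- if `(G₁,ι₁)` and `(G₂,ι₂)` have the same weak cut signature, then for
all `X, Y ⊆ V(G)`, the minimum order of an `X`-`Y` separation in `(G,ι) ⊕ (G₁,ι₁)`
equals the minimum order of an `X`-`Y` separation in `(G,ι) ⊕ (G₂,ι₂)`. -/
theorem same_weak_sig_same_min_sep {Λ : Type*} [Fintype Λ] [DecidableEq Λ]
    {V₀ V₁ V₂ W₁ W₂ : Type*} [Fintype V₀] [DecidableEq V₀] [Fintype V₁] [DecidableEq V₁]
    [Fintype V₂] [DecidableEq V₂] [Fintype W₁] [DecidableEq W₁]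
    [Fintype W₂] [DecidableEq W₂]
    (H : BGraph Λ V₀) (H₁ : BGraph Λ V₁) (H₂ : BGraph Λ V₂)
    (hsig : SameWeakSig H₁ H₂)
    (K₁ : SimpleGraph W₁) (f₁ : V₀ → W₁) (g₁ : V₁ → W₁) (hK₁ : IsGluing H H₁ K₁ f₁ g₁)
    (K₂ : SimpleGraph W₂) (f₂ : V₀ → W₂) (g₂ : V₂ → W₂) (hK₂ : IsGluing H H₂ K₂ f₂ g₂)
    (X Y : Finset V₀) (n : ℕ) :
    (∃ A B : Finset W₁, IsSep K₁ A B ∧ (∀ x ∈ X, f₁ x ∈ A) ∧ (∀ y ∈ Y, f₁ y ∈ B) ∧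
      (A ∩ B).card ≤ n) ↔
    (∃ A B : Finset W₂, IsSep K₂ A B ∧ (∀ x ∈ X, f₂ x ∈ A) ∧ (∀ y ∈ Y, f₂ y ∈ B) ∧
      (A ∩ B).card ≤ n) := by
  constructor
  · rintro ⟨A, B, hAB, hX, hY, hn⟩
    obtain ⟨A', B', hA'B', hA', hB', hcard⟩ := hK₁.exists_isSep_of_sameWeakSig hsig hK₂ hAB
    exact ⟨A', B', hA'B', fun x hx => hA' x (hX x hx), fun y hy => hB' y (hY y hy),
      hcard.trans hn⟩
  · rintro ⟨A, B, hAB, hX, hY, hn⟩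
    obtain ⟨A', B', hA'B', hA', hB', hcard⟩ := hK₂.exists_isSep_of_sameWeakSig hsig.symm hK₁ hAB
    exact ⟨A', B', hA'B', fun x hx => hA' x (hX x hx), fun y hy => hB' y (hY y hy),
      hcard.trans hn⟩
end
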